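/- arXiv:2110.15283 — 5 statements merged into one kernel-verified Lean document; each statement's English description precedes it below -/
import Mathlib

section
/- Let ℓ₁,…,ℓₙ : ℝ → ℝ be convex differentiable functions with |ℓᵢ'(u)| ≤ ρ for all u ∈ ℝ and all i, where ρ ≥ 0. Let m ≥ 1 and n ≥ 1 be integers, let c > 0, let a, w₂, …, w_m ∈ ℝⁿ, and set s = a + Σ_{j=2}^m w_j. Then (1/n)·Σ_{i=1}^n ℓᵢ(aᵢ) − (1/c)·Σ_{i=1}^n (ℓᵢ'(aᵢ))² + (c/(4n²))·Σ_{j=2}^m ‖w_j‖₂² ≥ (1/n)·Σ_{i=1}^n ℓᵢ(sᵢ) − m·n·ρ²/c. -/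
open Finset

/-- Lower bound for Lipschitz losses: if each `ℓᵢ` is convex, differentiable and
`ρ`-Lipschitz, `c > 0`, and `s = a + Σ_{j=2}^m w_j`, then
`(1/n)·Σᵢ ℓᵢ(aᵢ) − (1/c)·Σᵢ ℓᵢ'(aᵢ)² + (c/(4n²))·Σ_{j=2}^m ‖w_j‖₂²
  ≥ (1/n)·Σᵢ ℓᵢ(sᵢ) − mnρ²/c`. -/
theorem stmt_5 {n m : ℕ} [NeZero m] (hm : 1 ≤ m) (hn : 1 ≤ n)
    (ℓ : Fin n → ℝ → ℝ)
    (hconv : ∀ i, ConvexOn ℝ Set.univ (ℓ i))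
    (hdiff : ∀ i, Differentiable ℝ (ℓ i))
    (ρ : ℝ) (hρ : 0 ≤ ρ)
    (hlip : ∀ i u, |deriv (ℓ i) u| ≤ ρ)
    (c : ℝ) (hc : 0 < c)
    (a : Fin n → ℝ) (w : Fin m → Fin n → ℝ)
    (s : Fin n → ℝ) (hs : ∀ i, s i = a i + ∑ j ∈ Finset.univ.erase 0, w j i) :
    (1 / (n : ℝ)) * ∑ i, ℓ i (a i) - (1 / c) * ∑ i, (deriv (ℓ i) (a i)) ^ 2
        + (c / (4 * (n : ℝ) ^ 2)) * ∑ j ∈ Finset.univ.erase 0, (∑ i, (w j i) ^ 2)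
      ≥ (1 / (n : ℝ)) * ∑ i, ℓ i (s i) - (m : ℝ) * (n : ℝ) * ρ ^ 2 / c := by
  have hN : (0 : ℝ) < (n : ℝ) := by exact_mod_cast hn
  have hM : (1 : ℝ) ≤ (m : ℝ) := by exact_mod_cast hm
  -- Step 1: Lipschitz bound per coordinate
  have h1 : ∀ i, ℓ i (s i) ≤ ℓ i (a i) + ρ * ∑ j ∈ Finset.univ.erase 0, |w j i| := by
    intro i
    have hlipi : |ℓ i (s i) - ℓ i (a i)| ≤ ρ * |s i - a i| := by
      have := convex_univ.norm_image_sub_le_of_norm_deriv_le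
        (f := ℓ i) (fun x _ => (hdiff i x)) (fun x _ => hlip i x)
        (Set.mem_univ (a i)) (Set.mem_univ (s i))
      simpa [Real.norm_eq_abs] using this
    have habs : |s i - a i| ≤ ∑ j ∈ Finset.univ.erase 0, |w j i| := by
      rw [hs i]
      simpa using Finset.abs_sum_le_sum_abs (fun j => w j i) (Finset.univ.erase 0)
    have h2 := (abs_le.mp hlipi).2
    nlinarith [mul_le_mul_of_nonneg_left habs hρ]
  -- Step 2: AM-GM per term
  have h2 : ∀ (j : Fin m) (i : Fin n),
      ρ * |w j i| / (n : ℝ) ≤ c / (4 * (n : ℝ) ^ 2) * (w j i) ^ 2 + ρ ^ 2 / c := by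
    intro j i
    have hrw : c / (4 * (n : ℝ) ^ 2) * (w j i) ^ 2 + ρ ^ 2 / c
        = (c ^ 2 * (w j i) ^ 2 + 4 * (n : ℝ) ^ 2 * ρ ^ 2) / (4 * (n : ℝ) ^ 2 * c) := by
      field_simp
    rw [hrw, div_le_div_iff₀ hN (by positivity)]
    rcases abs_cases (w j i) with ⟨h, _⟩ | ⟨h, _⟩ <;> rw [h] <;>
      nlinarith [mul_nonneg hN.le (sq_nonneg (c * w j i - 2 * (n : ℝ) * ρ)),
        mul_nonneg hN.le (sq_nonneg (c * w j i + 2 * (n : ℝ) * ρ))]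
  -- Summed versions
  have hA : ∑ i, ℓ i (s i) ≤ ∑ i, ℓ i (a i)
      + ρ * ∑ i, ∑ j ∈ Finset.univ.erase 0, |w j i| := by
    rw [Finset.mul_sum]
    rw [← Finset.sum_add_distrib]
    exact Finset.sum_le_sum fun i _ => h1 i
  have hB : ρ * (∑ i, ∑ j ∈ Finset.univ.erase 0, |w j i|) / (n : ℝ)
      ≤ c / (4 * (n : ℝ) ^ 2) * ∑ j ∈ Finset.univ.erase 0, (∑ i, (w j i) ^ 2)
        + ((m : ℝ) - 1) * (n : ℝ) * ρ ^ 2 / c := by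
    have h := Finset.sum_le_sum (s := (Finset.univ : Finset (Fin n)))
      (fun i _ => Finset.sum_le_sum (s := Finset.univ.erase (0 : Fin m))
        (fun j _ => h2 j i))
    have hcard : ((Finset.univ.erase (0 : Fin m)).card : ℝ) = (m : ℝ) - 1 := by
      rw [Finset.card_erase_of_mem (Finset.mem_univ _)]
      simp [Nat.cast_sub hm]
    calc ρ * (∑ i, ∑ j ∈ Finset.univ.erase 0, |w j i|) / (n : ℝ)
        = ∑ i, ∑ j ∈ Finset.univ.erase 0, ρ * |w j i| / (n : ℝ) := by
          rw [Finset.mul_sum, Finset.sum_div]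
          congr 1; ext i
          rw [Finset.mul_sum, Finset.sum_div]
      _ ≤ ∑ i : Fin n, ∑ j ∈ Finset.univ.erase 0,
            (c / (4 * (n : ℝ) ^ 2) * (w j i) ^ 2 + ρ ^ 2 / c) := h
      _ = c / (4 * (n : ℝ) ^ 2) * ∑ j ∈ Finset.univ.erase 0, (∑ i, (w j i) ^ 2)
            + ((m : ℝ) - 1) * (n : ℝ) * ρ ^ 2 / c := by
          rw [Finset.sum_comm]
          rw [Finset.mul_sum]
          simp only [Finset.sum_add_distrib, Finset.sum_const, nsmul_eq_mul, Finset.mul_sum]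
          rw [Finset.card_univ, Fintype.card_fin]
          rw [hcard]
          ring
  have hC : ∑ i, (deriv (ℓ i) (a i)) ^ 2 ≤ (n : ℝ) * ρ ^ 2 := by
    calc ∑ i, (deriv (ℓ i) (a i)) ^ 2 ≤ ∑ _i : Fin n, ρ ^ 2 := by
          refine Finset.sum_le_sum fun i _ => ?_
          have := hlip i (a i)
          nlinarith [sq_abs (deriv (ℓ i) (a i)), abs_nonneg (deriv (ℓ i) (a i))]
      _ = (n : ℝ) * ρ ^ 2 := by simp [mul_comm]
  -- Assemble
  have e1 := (div_le_div_iff_of_pos_right hN).mpr hA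
  rw [add_div] at e1
  have e3 := (div_le_div_iff_of_pos_right hc).mpr hC
  have key : ((m : ℝ) - 1) * (n : ℝ) * ρ ^ 2 / c
      = (m : ℝ) * (n : ℝ) * ρ ^ 2 / c - (n : ℝ) * ρ ^ 2 / c := by ring
  ring_nf at e1 hB e3 key ⊢
  linarith [e1, hB, e3, key]
end

section
/- Let ℓ₁,…,ℓₙ : ℝ → ℝ be nonnegative convex differentiable functions with (ℓᵢ'(u))² ≤ ρ²·ℓᵢ(u) for all u ∈ ℝ and all i, where ρ ≥ 0. Let m ≥ 1 and n ≥ 1 be integers, let c > 0, set γ = n·ρ²/c, and assume m·γ ≤ 1. Let a, w₂, …, w_m ∈ ℝⁿ, set s = a + Σ_{j=2}^m w_j, and let r̄ ≥ 0 be a real number. Then r̄ + (1/n)·Σ_{i=1}^n ℓᵢ(aᵢ) − (1/c)·Σ_{i=1}^n (ℓᵢ'(aᵢ))² + (c/(4n²))·Σ_{j=2}^m ‖w_j‖₂² ≥ (1 − m·γ)·( (1/n)·Σ_{i=1}^n ℓᵢ(sᵢ) + r̄ ). -/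
/-!
For each coordinate, `√ℓᵢ` is `ρ/2`-Lipschitz, so `ℓᵢ(sᵢ) ≤ (√ℓᵢ(aᵢ) + ρ/2·|sᵢ - aᵢ|)²`, while
Cauchy–Schwarz gives `|sᵢ - aᵢ|² ≤ (m - 1)·Σⱼ wⱼᵢ²`. Splitting this square with the weights
`1 - mγ` and `(m - 1)γ`, which add up to `1 - γ`, and using `ℓᵢ'(aᵢ)²/c ≤ γ·ℓᵢ(aᵢ)/n` proves the
inequality coordinatewise; summing over `i` and adding `r̄ ≥ (1 - mγ)·r̄` finishes.
-/

open Finset Filter Topology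

section SqrtLipschitz

variable {f : ℝ → ℝ} {ρ : ℝ}

/- `√f` need not be differentiable where `f` vanishes, so the mean value theorem is applied to
`√(f + ε)`. -/
theorem sqrt_add_const_sub_le_of_sq_deriv_le (hf₀ : ∀ u, 0 ≤ f u) (hf : Differentiable ℝ f)
    (hρ : 0 ≤ ρ) (hf' : ∀ u, deriv f u ^ 2 ≤ ρ ^ 2 * f u) {ε : ℝ} (hε : 0 < ε) (x y : ℝ) :
    √(f y + ε) - √(f x + ε) ≤ ρ / 2 * |y - x| := by
  have hpos : ∀ u, 0 < f u + ε := fun u => by linarith [hf₀ u]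
  have hderiv : ∀ u, HasDerivAt (fun v => √(f v + ε)) (deriv f u / (2 * √(f u + ε))) u := by
    intro u
    exact ((hf u).hasDerivAt.add_const ε).sqrt (hpos u).ne'
  have hbound : ∀ u, ‖deriv f u / (2 * √(f u + ε))‖ ≤ ρ / 2 := by
    intro u
    have hsqrt : 0 < √(f u + ε) := Real.sqrt_pos.2 (hpos u)
    have hle : |deriv f u| ≤ ρ * √(f u + ε) := by
      rw [← Real.sqrt_sq hρ, ← Real.sqrt_mul (sq_nonneg ρ)]
      exact Real.abs_le_sqrt ((hf' u).trans (by nlinarith [sq_nonneg ρ]))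
    rw [Real.norm_eq_abs, abs_div, abs_of_pos (by positivity : (0 : ℝ) < 2 * √(f u + ε)),
      div_le_iff₀ (by positivity)]
    linarith
  have := convex_univ.norm_image_sub_le_of_norm_hasDerivWithin_le
    (fun u _ => (hderiv u).hasDerivWithinAt) (fun u _ => hbound u) (Set.mem_univ x)
    (Set.mem_univ y)
  exact (le_abs_self _).trans (by simpa only [Real.norm_eq_abs] using this)

theorem sqrt_le_sqrt_add_of_sq_deriv_le (hf₀ : ∀ u, 0 ≤ f u) (hf : Differentiable ℝ f)
    (hρ : 0 ≤ ρ) (hf' : ∀ u, deriv f u ^ 2 ≤ ρ ^ 2 * f u) (x y : ℝ) :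
    √(f y) ≤ √(f x) + ρ / 2 * |y - x| := by
  have hlim : Tendsto (fun ε => √(f y + ε) - √(f x + ε)) (𝓝[>] 0) (𝓝 (√(f y) - √(f x))) := by
    refine (Continuous.tendsto' ?_ 0 _ (by simp)).mono_left nhdsWithin_le_nhds
    fun_prop
  have := le_of_tendsto hlim (eventually_nhdsWithin_of_forall fun ε hε =>
    sqrt_add_const_sub_le_of_sq_deriv_le hf₀ hf hρ hf' hε x y)
  linarith

end SqrtLipschitz

theorem mul_add_sq_le_of_sq_le_mul {α β u t K : ℝ} (hα : 0 ≤ α) (hβ : 0 ≤ β) (hαβ : α + β ≤ 1)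
    (hK : 0 ≤ K) (ht : t ^ 2 ≤ β * K) : α * (u + t) ^ 2 ≤ (α + β) * u ^ 2 + K := by
  rcases hβ.eq_or_lt with rfl | hβ
  · have : t = 0 := by nlinarith [sq_nonneg t]
    subst this
    linarith
  · -- `β · (rhs - lhs) ≥ (β u - α t)² + (1 - α (α + β)) t²`
    refine le_of_mul_le_mul_left ?_ hβ
    have hαβ' : 0 ≤ 1 - α * (α + β) := by nlinarith
    nlinarith [sq_nonneg (β * u - α * t), mul_nonneg (sq_nonneg t) hαβ']

theorem one_sub_mul_mul_le_of_le_sqrt_add_sq {n m c ρ γ A S g v W : ℝ} (hn : 0 < n)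
    (hc : 0 < c) (hγc : γ * c = n * ρ ^ 2) (hm : 1 ≤ m) (hmγ : m * γ ≤ 1) (hA : 0 ≤ A) (hW : 0 ≤ W)
    (hS : S ≤ (√A + ρ / 2 * v) ^ 2) (hv : v ^ 2 ≤ (m - 1) * W) (hg : g ^ 2 ≤ ρ ^ 2 * A) :
    (1 - m * γ) * (1 / n * S) ≤ 1 / n * A - 1 / c * g ^ 2 + c / (4 * n ^ 2) * W := by
  have hγ : 0 ≤ γ := by nlinarith [sq_nonneg ρ]
  have ht : (ρ / 2 * v) ^ 2 ≤ (m - 1) * γ * (c / (4 * n) * W) := by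
    have : (m - 1) * γ * (c / (4 * n) * W) = ρ ^ 2 / 4 * ((m - 1) * W) := by
      field_simp
      linear_combination (m - 1) * W * hγc
    rw [this]
    nlinarith [sq_nonneg ρ]
  have hsq := mul_add_sq_le_of_sq_le_mul (α := 1 - m * γ) (u := √A) (by linarith)
    (by nlinarith) (by nlinarith) (by positivity) ht
  rw [Real.sq_sqrt hA] at hsq
  have hg' : 1 / c * g ^ 2 ≤ γ / n * A := by
    rw [div_mul_eq_mul_div, div_mul_eq_mul_div, div_le_div_iff₀ hc hn]
    nlinarith
  have hS' : (1 - m * γ) * S ≤ (1 - m * γ) * (√A + ρ / 2 * v) ^ 2 :=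
    mul_le_mul_of_nonneg_left hS (by linarith)
  calc (1 - m * γ) * (1 / n * S) = 1 / n * ((1 - m * γ) * S) := by ring
    _ ≤ 1 / n * ((1 - m * γ + (m - 1) * γ) * A + c / (4 * n) * W) := by gcongr; linarith
    _ = 1 / n * A - γ / n * A + c / (4 * n ^ 2) * W := by field_simp; ring
    _ ≤ _ := by linarith

theorem stmt_6_general {n m : ℕ} [NeZero m]
    (ℓ : Fin n → ℝ → ℝ)
    (hnonneg : ∀ i u, 0 ≤ ℓ i u)
    (hdiff : ∀ i, Differentiable ℝ (ℓ i))
    (ρ : ℝ) (hρ : 0 ≤ ρ)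
    (hsqlip : ∀ i u, (deriv (ℓ i) u) ^ 2 ≤ ρ ^ 2 * ℓ i u)
    (c : ℝ) (hc : 0 < c)
    (γ : ℝ) (hγ : γ = (n : ℝ) * ρ ^ 2 / c) (hmγ : (m : ℝ) * γ ≤ 1)
    (a : Fin n → ℝ) (w : Fin m → Fin n → ℝ)
    (s : Fin n → ℝ) (hs : ∀ i, s i = a i + ∑ j ∈ Finset.univ.erase 0, w j i)
    (rbar : ℝ) (hrbar : 0 ≤ rbar) :
    rbar + (1 / (n : ℝ)) * ∑ i, ℓ i (a i) - (1 / c) * ∑ i, (deriv (ℓ i) (a i)) ^ 2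
        + (c / (4 * (n : ℝ) ^ 2)) * ∑ j ∈ Finset.univ.erase 0, (∑ i, (w j i) ^ 2)
      ≥ (1 - (m : ℝ) * γ) * ((1 / (n : ℝ)) * ∑ i, ℓ i (s i) + rbar) := by
  have hγc : γ * c = n * ρ ^ 2 := by rw [hγ]; field_simp
  have hm : (1 : ℝ) ≤ m := by exact_mod_cast NeZero.one_le
  have hcard : (#(univ.erase (0 : Fin m)) : ℝ) = m - 1 := by
    rw [card_erase_of_mem (mem_univ _), card_univ, Fintype.card_fin, Nat.cast_pred NeZero.one_le]
  have hcoord : ∀ i, (1 - m * γ) * (1 / n * ℓ i (s i)) ≤ 1 / n * ℓ i (a i)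
      - 1 / c * deriv (ℓ i) (a i) ^ 2 + c / (4 * n ^ 2) * ∑ j ∈ univ.erase 0, w j i ^ 2 := by
    intro i
    refine one_sub_mul_mul_le_of_le_sqrt_add_sq (v := |s i - a i|) (Nat.cast_pos.2 i.pos) hc hγc
      hm hmγ (hnonneg i _) (sum_nonneg fun _ _ => sq_nonneg _) ?_ ?_ (hsqlip i _)
    · exact (Real.sqrt_le_iff.1 <| sqrt_le_sqrt_add_of_sq_deriv_le (hnonneg i) (hdiff i) hρ
        (hsqlip i) (a i) (s i)).2
    · rw [sq_abs, hs i, add_sub_cancel_left, ← hcard]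
      exact sq_sum_le_card_mul_sum_sq
  have hsum := sum_le_sum fun i (_ : i ∈ univ) => hcoord i
  simp only [← mul_sum, sum_add_distrib, sum_sub_distrib] at hsum
  rw [sum_comm]
  have hmγ₀ : 0 ≤ (m : ℝ) * γ := by rw [hγ]; positivity
  linarith [mul_nonneg hmγ₀ hrbar]

/-- Lower bound for square-root-Lipschitz losses: if each `ℓᵢ` is nonnegative, convex,
differentiable with `ℓᵢ'(u)² ≤ ρ²·ℓᵢ(u)`, `c > 0`, `γ = nρ²/c`, `mγ ≤ 1`, `r̄ ≥ 0`, and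
`s = a + Σ_{j=2}^m w_j`, then
`r̄ + (1/n)·Σᵢ ℓᵢ(aᵢ) − (1/c)·Σᵢ ℓᵢ'(aᵢ)² + (c/(4n²))·Σ_{j=2}^m ‖w_j‖₂²
  ≥ (1 − mγ)·((1/n)·Σᵢ ℓᵢ(sᵢ) + r̄)`. -/
theorem stmt_6 {n m : ℕ} [NeZero m] (hm : 1 ≤ m) (hn : 1 ≤ n)
    (ℓ : Fin n → ℝ → ℝ)
    (hnonneg : ∀ i u, 0 ≤ ℓ i u)
    (hconv : ∀ i, ConvexOn ℝ Set.univ (ℓ i))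
    (hdiff : ∀ i, Differentiable ℝ (ℓ i))
    (ρ : ℝ) (hρ : 0 ≤ ρ)
    (hsqlip : ∀ i u, (deriv (ℓ i) u) ^ 2 ≤ ρ ^ 2 * ℓ i u)
    (c : ℝ) (hc : 0 < c)
    (γ : ℝ) (hγ : γ = (n : ℝ) * ρ ^ 2 / c) (hmγ : (m : ℝ) * γ ≤ 1)
    (a : Fin n → ℝ) (w : Fin m → Fin n → ℝ)
    (s : Fin n → ℝ) (hs : ∀ i, s i = a i + ∑ j ∈ Finset.univ.erase 0, w j i)
    (rbar : ℝ) (hrbar : 0 ≤ rbar) :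
    rbar + (1 / (n : ℝ)) * ∑ i, ℓ i (a i) - (1 / c) * ∑ i, (deriv (ℓ i) (a i)) ^ 2
        + (c / (4 * (n : ℝ) ^ 2)) * ∑ j ∈ Finset.univ.erase 0, (∑ i, (w j i) ^ 2)
      ≥ (1 - (m : ℝ) * γ) * ((1 / (n : ℝ)) * ∑ i, ℓ i (s i) + rbar) :=
  stmt_6_general ℓ hnonneg hdiff ρ hρ hsqlip c hc γ hγ hmγ a w s hs rbar hrbar
end

section
/- Let G be a connected undirected simple graph on the vertex set {1,…,m} with m ≥ 2 and Laplacian matrix L ∈ ℝ^{m×m}, let X ∈ ℝ^{n×d} have column blocks X_j ∈ ℝ^{n×d_j} (d = Σ_{j=1}^m d_j), and let θ ∈ ℝ^d be partitioned accordingly as θ = (θ₁;…;θ_m). Then there exists a matrix V ∈ ℝ^{n×m} such that V L e_j = −X_j θ_j for every j ∈ {2,…,m}, V L e₁ = Σ_{j=2}^m X_j θ_j, and ‖V‖_F² ≤ 2·‖L†‖²·‖X‖²·‖θ‖₂². -/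
/-!
Let `B` be the matrix whose first column is `Σ_{j ≥ 2} X_j θ_j` and whose column `j ≥ 2` is
`-X_j θ_j`, so that the required identities read `V L = B`. The rows of `B` sum to zero. As `G`
is connected, the kernel of `L` is spanned by the all-ones vector, so by rank–nullity the
zero-sum vectors are exactly the range of the symmetric matrix `L`; hence `B = Z L`, and
`V := B L†` satisfies `V L = Z (L L† L) = B` (`L†` exists: conjugate the pseudoinverse of the
diagonal form of `L` given by the spectral theorem). Then `‖V‖_F ≤ ‖L†‖ ‖B‖_F`, and since
`Σ_{j ∈ S} X_j θ_j = X θ_S` for the restriction `θ_S` of `θ` to the blocks in `S`, both the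
first column and the remaining columns of `B` contribute at most `‖X‖² ‖θ‖²` to `‖B‖_F²`.
-/
open Matrix Finset

/-- The ℓ₂→ℓ₂ operator norm (largest singular value) of a real matrix. -/
noncomputable def opNorm {α β : Type*} [Fintype α] [Fintype β] [DecidableEq β]
    (M : Matrix α β ℝ) : ℝ :=
  ‖LinearMap.toContinuousLinearMap (Matrix.toEuclideanLin M)‖

/-- `P` satisfies the four Moore–Penrose conditions for `M`. -/
def IsMoorePenrose {α β : Type*} [Fintype α] [Fintype β]
    (M : Matrix α β ℝ) (P : Matrix β α ℝ) : Prop :=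
  M * P * M = M ∧ P * M * P = P ∧ (M * P)ᵀ = M * P ∧ (P * M)ᵀ = P * M

open Classical in
/-- The Moore–Penrose pseudoinverse. -/
noncomputable def pinv {α β : Type*} [Fintype α] [Fintype β]
    (M : Matrix α β ℝ) : Matrix β α ℝ :=
  if h : ∃ P, IsMoorePenrose M P then h.choose else 0

section OpNorm

variable {α β : Type*} [Fintype α] [Fintype β] [DecidableEq β]

theorem sum_sq_mulVec_le_opNorm_sq (M : Matrix α β ℝ) (x : β → ℝ) :
    ∑ i, (M *ᵥ x) i ^ 2 ≤ opNorm M ^ 2 * ∑ j, x j ^ 2 := by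
  have h := (LinearMap.toContinuousLinearMap (toEuclideanLin M)).le_opNorm (WithLp.toLp 2 x)
  have h' := pow_le_pow_left₀ (norm_nonneg _) h 2
  rwa [mul_pow, EuclideanSpace.real_norm_sq_eq, EuclideanSpace.real_norm_sq_eq] at h'

theorem opNorm_transpose [DecidableEq α] (M : Matrix α β ℝ) : opNorm Mᵀ = opNorm M := by
  rw [opNorm, ← conjTranspose_eq_transpose_of_trivial, toEuclideanLin_conjTranspose_eq_adjoint,
    LinearMap.adjoint_toContinuousLinearMap]
  exact ContinuousLinearMap.adjoint.norm_map _

theorem sum_sq_mul_le_opNorm_sq [DecidableEq α] {γ : Type*} [Fintype γ] (A : Matrix γ α ℝ)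
    (P : Matrix α β ℝ) :
    ∑ i, ∑ j, (A * P) i j ^ 2 ≤ opNorm P ^ 2 * ∑ i, ∑ j, A i j ^ 2 := by
  rw [mul_sum]
  gcongr with i
  rw [← opNorm_transpose]
  have h := sum_sq_mulVec_le_opNorm_sq Pᵀ (A i)
  rwa [mulVec_transpose] at h

end OpNorm

section MoorePenrose

variable {α : Type*} [Fintype α]

theorem isMoorePenrose_diagonal [DecidableEq α] (c : α → ℝ) :
    IsMoorePenrose (diagonal c) (diagonal c⁻¹) := by
  have h (x : ℝ) : x⁻¹ * x * x⁻¹ = x⁻¹ := by simpa using mul_inv_mul_cancel x⁻¹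
  refine ⟨?_, ?_, ?_, ?_⟩ <;> simp [diagonal_mul_diagonal, mul_inv_mul_cancel, h]

theorem IsMoorePenrose.map_starAlgEquiv {A P : Matrix α α ℝ} (h : IsMoorePenrose A P)
    (φ : Matrix α α ℝ ≃⋆ₐ[ℝ] Matrix α α ℝ) : IsMoorePenrose (φ A) (φ P) := by
  obtain ⟨h₁, h₂, h₃, h₄⟩ := h
  simp only [IsMoorePenrose, ← conjTranspose_eq_transpose_of_trivial, ← star_eq_conjTranspose,
    ← map_mul, ← map_star] at *
  exact ⟨by rw [h₁], by rw [h₂], by rw [h₃], by rw [h₄]⟩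

theorem Matrix.IsHermitian.exists_isMoorePenrose [DecidableEq α] {A : Matrix α α ℝ}
    (hA : A.IsHermitian) : ∃ P, IsMoorePenrose A P := by
  rw [hA.spectral_theorem]
  exact ⟨_, (isMoorePenrose_diagonal _).map_starAlgEquiv _⟩

theorem isMoorePenrose_pinv {β : Type*} [Fintype β] {M : Matrix α β ℝ}
    (h : ∃ P, IsMoorePenrose M P) : IsMoorePenrose M (pinv M) := by
  rw [pinv, dif_pos h]
  exact h.choose_spec

end MoorePenrose

namespace SimpleGraph

variable {V : Type*} [Fintype V] [DecidableEq V] {G : SimpleGraph V} [DecidableRel G.Adj]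

theorem sum_lapMatrix_mulVec (x : V → ℝ) : ∑ i, (G.lapMatrix ℝ *ᵥ x) i = 0 := by
  have h : (fun _ => (1 : ℝ)) ᵥ* G.lapMatrix ℝ = 0 := by
    rw [← mulVec_transpose, (G.isSymm_lapMatrix (R := ℝ)).eq, lapMatrix_mulVec_const_eq_zero]
  simpa [h, dotProduct] using dotProduct_mulVec (fun _ => (1 : ℝ)) (G.lapMatrix ℝ) x

theorem Connected.mem_range_toLin'_lapMatrix_iff (hG : G.Connected) {x : V → ℝ} :
    x ∈ LinearMap.range (toLin' (G.lapMatrix ℝ)) ↔ ∑ i, x i = 0 := by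
  set L := toLin' (G.lapMatrix ℝ)
  set φ : (V → ℝ) →ₗ[ℝ] ℝ := ∑ i, LinearMap.proj i
  have hφ : ∀ x, φ x = ∑ i, x i := fun x => by simp [φ]
  obtain ⟨v⟩ := hG.nonempty
  have hle : LinearMap.range L ≤ LinearMap.ker φ := by
    rintro _ ⟨z, rfl⟩
    simpa [hφ, L] using sum_lapMatrix_mulVec z
  have hL : Module.finrank ℝ (LinearMap.ker L) = 1 := by
    have := hG.preconnected.subsingleton_connectedComponent
    rw [← card_connectedComponent_eq_finrank_ker_toLin'_lapMatrix, Fintype.card_eq_one_iff]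
    exact ⟨G.connectedComponentMk v, fun _ => Subsingleton.elim _ _⟩
  have hφ_range : LinearMap.range φ = ⊤ :=
    LinearMap.range_eq_top.mpr fun c => ⟨Pi.single v c, by simp [hφ]⟩
  have hL_rank := L.finrank_range_add_finrank_ker
  have hφ_rank := φ.finrank_range_add_finrank_ker
  rw [hφ_range, finrank_top, Module.finrank_self] at hφ_rank
  rw [Submodule.eq_of_le_of_finrank_eq hle (by omega), LinearMap.mem_ker, hφ]

theorem Connected.exists_mul_lapMatrix_eq (hG : G.Connected) {ι : Type*} (B : Matrix ι V ℝ)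
    (hB : ∀ i, ∑ j, B i j = 0) : ∃ Z : Matrix ι V ℝ, Z * G.lapMatrix ℝ = B := by
  choose z hz using fun i => hG.mem_range_toLin'_lapMatrix_iff.2 (hB i)
  refine ⟨of z, funext fun i => ?_⟩
  rw [← hz, toLin'_apply, ← vecMul_transpose, (G.isSymm_lapMatrix (R := ℝ)).eq]
  rfl

theorem Connected.mul_pinv_lapMatrix_mul (hG : G.Connected) {ι : Type*} {B : Matrix ι V ℝ}
    (hB : ∀ i, ∑ j, B i j = 0) : B * pinv (G.lapMatrix ℝ) * G.lapMatrix ℝ = B := by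
  obtain ⟨Z, rfl⟩ := hG.exists_mul_lapMatrix_eq B hB
  have hP := isMoorePenrose_pinv (G.isHermitian_lapMatrix (R := ℝ)).exists_isMoorePenrose
  rw [Matrix.mul_assoc (Z * _), Matrix.mul_assoc Z, ← Matrix.mul_assoc (G.lapMatrix ℝ), hP.1]

end SimpleGraph

section Blocks

variable {ι κ : Type*} [Fintype ι] [DecidableEq ι] {d : ι → Type*} [∀ j, Fintype (d j)]

def balancedBlockMatrix (Xb : ∀ j, Matrix κ (d j) ℝ) (θ : ∀ j, d j → ℝ) (j₀ : ι) :
    Matrix κ ι ℝ :=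
  of fun i j => if j = j₀ then ∑ j' ∈ univ.erase j₀, (Xb j' *ᵥ θ j') i else -(Xb j *ᵥ θ j) i

theorem sum_balancedBlockMatrix_apply (Xb : ∀ j, Matrix κ (d j) ℝ) (θ : ∀ j, d j → ℝ) (j₀ : ι)
    (f : ℝ → ℝ) (i : κ) :
    ∑ j, f (balancedBlockMatrix Xb θ j₀ i j) =
      f (∑ j ∈ univ.erase j₀, (Xb j *ᵥ θ j) i) + ∑ j ∈ univ.erase j₀, f (-(Xb j *ᵥ θ j) i) := by
  rw [← add_sum_erase univ _ (mem_univ j₀)]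
  exact congrArg₂ (· + ·) (by simp [balancedBlockMatrix])
    (sum_congr rfl fun j hj => by simp [balancedBlockMatrix, ne_of_mem_erase hj])

theorem sum_balancedBlockMatrix_row (Xb : ∀ j, Matrix κ (d j) ℝ) (θ : ∀ j, d j → ℝ) (j₀ : ι)
    (i : κ) : ∑ j, balancedBlockMatrix Xb θ j₀ i j = 0 := by
  simpa using sum_balancedBlockMatrix_apply Xb θ j₀ id i

variable [Fintype κ] [∀ j, DecidableEq (d j)]

theorem sum_sq_sum_mulVec_le {X : Matrix κ (Σ j, d j) ℝ} {Xb : ∀ j, Matrix κ (d j) ℝ}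
    (hX : ∀ i j k, X i ⟨j, k⟩ = Xb j i k) (θ : ∀ j, d j → ℝ) (S : Finset ι) :
    ∑ i, (∑ j ∈ S, (Xb j *ᵥ θ j) i) ^ 2 ≤ opNorm X ^ 2 * ∑ j ∈ S, ∑ k, θ j k ^ 2 := by
  set θS : (Σ j, d j) → ℝ := fun σ => if σ.1 ∈ S then θ σ.1 σ.2 else 0
  have hXθS : X *ᵥ θS = ∑ j ∈ S, Xb j *ᵥ θ j := by
    ext i
    simp [θS, mulVec, dotProduct, Fintype.sum_sigma, hX, Finset.sum_apply]
  have hθS : ∑ σ, θS σ ^ 2 = ∑ j ∈ S, ∑ k, θ j k ^ 2 := by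
    simp [θS, Fintype.sum_sigma]
  simpa [hXθS, hθS, Finset.sum_apply] using sum_sq_mulVec_le_opNorm_sq X θS

theorem sum_sum_sq_mulVec_le {X : Matrix κ (Σ j, d j) ℝ} {Xb : ∀ j, Matrix κ (d j) ℝ}
    (hX : ∀ i j k, X i ⟨j, k⟩ = Xb j i k) (θ : ∀ j, d j → ℝ) (S : Finset ι) :
    ∑ j ∈ S, ∑ i, (Xb j *ᵥ θ j) i ^ 2 ≤ opNorm X ^ 2 * ∑ j ∈ S, ∑ k, θ j k ^ 2 := by
  rw [mul_sum]
  gcongr with j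
  simpa using sum_sq_sum_mulVec_le hX θ {j}

theorem sum_sq_balancedBlockMatrix_le {X : Matrix κ (Σ j, d j) ℝ} {Xb : ∀ j, Matrix κ (d j) ℝ}
    (hX : ∀ i j k, X i ⟨j, k⟩ = Xb j i k) (θ : ∀ j, d j → ℝ) (j₀ : ι) :
    ∑ i, ∑ j, balancedBlockMatrix Xb θ j₀ i j ^ 2 ≤ 2 * opNorm X ^ 2 * ∑ j, ∑ k, θ j k ^ 2 := by
  set S := univ.erase j₀
  have hθS : ∑ j ∈ S, ∑ k, θ j k ^ 2 ≤ ∑ j, ∑ k, θ j k ^ 2 :=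
    sum_le_sum_of_subset_of_nonneg (subset_univ S) fun _ _ _ => by positivity
  calc ∑ i, ∑ j, balancedBlockMatrix Xb θ j₀ i j ^ 2
      = ∑ i, (∑ j ∈ S, (Xb j *ᵥ θ j) i) ^ 2 + ∑ j ∈ S, ∑ i, (Xb j *ᵥ θ j) i ^ 2 := by
        simp only [sum_balancedBlockMatrix_apply Xb θ j₀ (· ^ 2), neg_sq, sum_add_distrib]
        rw [sum_comm (s := S)]
    _ ≤ opNorm X ^ 2 * ∑ j ∈ S, ∑ k, θ j k ^ 2 + opNorm X ^ 2 * ∑ j ∈ S, ∑ k, θ j k ^ 2 :=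
        add_le_add (sum_sq_sum_mulVec_le hX θ S) (sum_sum_sq_mulVec_le hX θ S)
    _ ≤ 2 * opNorm X ^ 2 * ∑ j, ∑ k, θ j k ^ 2 := by
        rw [← two_mul, mul_assoc]
        gcongr

end Blocks

theorem stmt_7_general {m n : ℕ} [NeZero m]
    (G : SimpleGraph (Fin m)) [DecidableRel G.Adj] (hG : G.Connected)
    (d : Fin m → ℕ) (Xb : ∀ j, Matrix (Fin n) (Fin (d j)) ℝ)
    (X : Matrix (Fin n) ((j : Fin m) × Fin (d j)) ℝ)
    (hX : ∀ i j k, X i ⟨j, k⟩ = Xb j i k)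
    (θ : ∀ j, Fin (d j) → ℝ) :
    ∃ V : Matrix (Fin n) (Fin m) ℝ,
      (∀ j : Fin m, j ≠ 0 → ∀ i, (V * G.lapMatrix ℝ) i j = -((Xb j).mulVec (θ j) i)) ∧
      (∀ i, (V * G.lapMatrix ℝ) i 0 = ∑ j ∈ Finset.univ.erase 0, (Xb j).mulVec (θ j) i) ∧
      (∑ i, ∑ j, (V i j) ^ 2) ≤
        2 * opNorm (pinv (G.lapMatrix ℝ)) ^ 2 * opNorm X ^ 2 * (∑ j, ∑ k, (θ j k) ^ 2) := by
  set L := G.lapMatrix ℝ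
  set B := balancedBlockMatrix Xb θ 0
  have hVL : B * pinv L * L = B := hG.mul_pinv_lapMatrix_mul (sum_balancedBlockMatrix_row Xb θ 0)
  refine ⟨B * pinv L, fun j hj i => by rw [hVL]; simp [B, balancedBlockMatrix, hj],
    fun i => by rw [hVL]; simp [B, balancedBlockMatrix], ?_⟩
  calc ∑ i, ∑ j, (B * pinv L) i j ^ 2 ≤ opNorm (pinv L) ^ 2 * ∑ i, ∑ j, B i j ^ 2 :=
        sum_sq_mul_le_opNorm_sq B (pinv L)
    _ ≤ opNorm (pinv L) ^ 2 * (2 * opNorm X ^ 2 * ∑ j, ∑ k, θ j k ^ 2) := by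
        gcongr
        exact sum_sq_balancedBlockMatrix_le hX θ 0
    _ = 2 * opNorm (pinv L) ^ 2 * opNorm X ^ 2 * ∑ j, ∑ k, θ j k ^ 2 := by ring

/-- For a connected graph `G` on `{1,…,m}` (`m ≥ 2`, the first agent has index `0`),
design blocks `X_j` and a block vector `θ`, there is `V ∈ ℝ^{n×m}` with
`V L e_j = −X_j θ_j` for `j ≥ 2`, `V L e₁ = Σ_{j=2}^m X_j θ_j`, and
`‖V‖_F² ≤ 2‖L†‖²‖X‖²‖θ‖₂²`. -/
theorem stmt_7 {m n : ℕ} [NeZero m] (hm : 2 ≤ m)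
    (G : SimpleGraph (Fin m)) [DecidableRel G.Adj] (hG : G.Connected)
    (d : Fin m → ℕ) (Xb : ∀ j, Matrix (Fin n) (Fin (d j)) ℝ)
    (X : Matrix (Fin n) ((j : Fin m) × Fin (d j)) ℝ)
    (hX : ∀ i j k, X i ⟨j, k⟩ = Xb j i k)
    (θ : ∀ j, Fin (d j) → ℝ) :
    ∃ V : Matrix (Fin n) (Fin m) ℝ,
      (∀ j : Fin m, j ≠ 0 → ∀ i, (V * G.lapMatrix ℝ) i j = -((Xb j).mulVec (θ j) i)) ∧
      (∀ i, (V * G.lapMatrix ℝ) i 0 = ∑ j ∈ Finset.univ.erase 0, (Xb j).mulVec (θ j) i) ∧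
      (∑ i, ∑ j, (V i j) ^ 2) ≤
        2 * opNorm (pinv (G.lapMatrix ℝ)) ^ 2 * opNorm X ^ 2 * (∑ j, ∑ k, (θ j k) ^ 2) :=
  stmt_7_general G hG d Xb X hX θ
end

section
/- Let f : ℝ → ℝ be nonnegative and differentiable, and let ρ ≥ 0. Then the following are equivalent: (i) |f'(u)| ≤ ρ·√(f(u)) for all u ∈ ℝ; (ii) |√(f(u)) − √(f(v))| ≤ (ρ/2)·|u − v| for all u, v ∈ ℝ. -/
/-!
Where `f > 0`, the chain rule gives `(√f)' = f' / (2√f)`, so `|f'| ≤ ρ√f` bounds `(√f)'` by `ρ/2`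
and the mean value inequality makes `√f` `(ρ/2)`-Lipschitz; zeros of `f` are handled by applying
this to `f + ε` and letting `ε → 0`. Conversely, writing `f x - f u = (√f x - √f u)(√f x + √f u)`,
the Lipschitz bound gives `|f x - f u| ≤ (ρ√(f u) + ρ²/4 |x - u|) |x - u|`, whence `|f'(u)| ≤ ρ√(f u)`.
-/

open Filter Topology

theorem abs_sqrt_sub_sqrt_le_of_abs_deriv_le_of_pos {f : ℝ → ℝ} (hf : ∀ x, 0 < f x)
    (hdiff : Differentiable ℝ f) {ρ : ℝ} (hd : ∀ x, |deriv f x| ≤ ρ * √(f x)) (u v : ℝ) :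
    |√(f u) - √(f v)| ≤ ρ / 2 * |u - v| := by
  have hderiv : ∀ x, HasDerivAt (fun y => √(f y)) (deriv f x / (2 * √(f x))) x := fun x =>
    (hdiff x).hasDerivAt.sqrt (hf x).ne'
  have hbound : ∀ x, ‖deriv f x / (2 * √(f x))‖ ≤ ρ / 2 := by
    intro x
    have hsqrt : 0 < 2 * √(f x) := by have := Real.sqrt_pos.2 (hf x); positivity
    rw [Real.norm_eq_abs, abs_div, abs_of_pos hsqrt, div_le_iff₀ hsqrt]
    linarith [hd x]
  simpa only [Real.norm_eq_abs] using Convex.norm_image_sub_le_of_norm_hasDerivWithin_le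
    (fun x _ => (hderiv x).hasDerivWithinAt) (fun x _ => hbound x) convex_univ
    (Set.mem_univ v) (Set.mem_univ u)

theorem abs_sqrt_sub_sqrt_le_of_abs_deriv_le {f : ℝ → ℝ} (hf : ∀ x, 0 ≤ f x)
    (hdiff : Differentiable ℝ f) {ρ : ℝ} (hρ : 0 ≤ ρ) (hd : ∀ x, |deriv f x| ≤ ρ * √(f x))
    (u v : ℝ) : |√(f u) - √(f v)| ≤ ρ / 2 * |u - v| := by
  have hshift : ∀ ε > 0, |√(f u + ε) - √(f v + ε)| ≤ ρ / 2 * |u - v| := by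
    intro ε hε
    refine abs_sqrt_sub_sqrt_le_of_abs_deriv_le_of_pos (f := fun x => f x + ε)
      (fun x => by linarith [hf x]) (hdiff.add_const ε) (fun x => ?_) u v
    rw [deriv_add_const]
    exact (hd x).trans (by gcongr; linarith)
  have hlim : Tendsto (fun ε => |√(f u + ε) - √(f v + ε)|) (𝓝[>] 0)
      (𝓝 |√(f u) - √(f v)|) := by
    have hcont : Continuous fun ε => |√(f u + ε) - √(f v + ε)| := by fun_prop
    simpa using hcont.continuousAt.tendsto.mono_left (nhdsWithin_le_nhds (a := (0 : ℝ)))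
  exact le_of_tendsto hlim (eventually_nhdsWithin_of_forall hshift)

theorem abs_sub_le_of_abs_sqrt_sub_sqrt_le {a b L : ℝ} (ha : 0 ≤ a) (hb : 0 ≤ b)
    (h : |√a - √b| ≤ L) : |a - b| ≤ L * (2 * √b + L) := by
  have hfactor : a - b = (√a - √b) * (√a + √b) := by
    linear_combination -Real.sq_sqrt ha + Real.sq_sqrt hb
  have hsum : √a + √b ≤ 2 * √b + L := by linarith [(abs_le.1 h).2]
  rw [hfactor, abs_mul, abs_of_nonneg (by positivity : 0 ≤ √a + √b)]
  exact mul_le_mul h hsum (by positivity) ((abs_nonneg _).trans h)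

theorem abs_deriv_le_of_abs_sub_le {f : ℝ → ℝ} {u C K : ℝ} (hC : 0 ≤ C)
    (h : ∀ x, |f x - f u| ≤ (C + K * |x - u|) * |x - u|) : |deriv f u| ≤ C := by
  refine le_of_forall_pos_le_add fun ε hε => ?_
  rw [← Real.norm_eq_abs]
  refine norm_deriv_le_of_lip' (by positivity) ?_
  have hsmall : Tendsto (fun x => K * |x - u|) (𝓝 u) (𝓝 0) := by
    have hcont : Continuous fun x => K * |x - u| := by fun_prop
    simpa using hcont.tendsto u
  filter_upwards [hsmall.eventually (ge_mem_nhds hε)] with x hx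
  rw [Real.norm_eq_abs, Real.norm_eq_abs]
  exact (h x).trans (by gcongr)

/-- For a nonnegative differentiable `f : ℝ → ℝ` and `ρ ≥ 0`, the condition
`|f'(u)| ≤ ρ·√(f(u))` for all `u` is equivalent to `√f` being `(ρ/2)`-Lipschitz. -/
theorem stmt_10 (f : ℝ → ℝ) (hf0 : ∀ u, 0 ≤ f u) (hdiff : Differentiable ℝ f)
    (ρ : ℝ) (hρ : 0 ≤ ρ) :
    (∀ u : ℝ, |deriv f u| ≤ ρ * Real.sqrt (f u)) ↔
      (∀ u v : ℝ, |Real.sqrt (f u) - Real.sqrt (f v)| ≤ ρ / 2 * |u - v|) := by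
  refine ⟨abs_sqrt_sub_sqrt_le_of_abs_deriv_le hf0 hdiff hρ, fun hlip u => ?_⟩
  refine abs_deriv_le_of_abs_sub_le (K := ρ ^ 2 / 4) (by positivity) fun x => ?_
  calc |f x - f u| ≤ ρ / 2 * |x - u| * (2 * √(f u) + ρ / 2 * |x - u|) :=
        abs_sub_le_of_abs_sqrt_sub_sqrt_le (hf0 x) (hf0 u) (hlip x u)
    _ = (ρ * √(f u) + ρ ^ 2 / 4 * |x - u|) * |x - u| := by ring
end

section
/- Let ℓ : ℝ → ℝ be convex and differentiable, let σ > 0 and n > 0 be real numbers, and let b ∈ ℝ. Then λ* ∈ ℝ minimizes the extended-real-valued function λ ↦ (1/n)·ℓ*(λ) + (λ − b)²/(2σ) if and only if λ* minimizes the function λ ↦ (1/n)·ℓ((n/σ)·(b − λ)) + λ²/(2σ). -/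
/-- The convex (Fenchel) conjugate of `ℓ : ℝ → ℝ`, valued in the extended reals. -/
noncomputable def sconj (g : ℝ → ℝ) (v : ℝ) : EReal :=
  ⨆ x : ℝ, ((v * x - g x : ℝ) : EReal)

/-!
Both objectives are minimized exactly at the points `μ` with `ℓ'((n/σ)(b - μ)) = μ`. Such a
point exists by Darboux's theorem, since `x ↦ ℓ'(x) + t x` is increasing and unbounded in both
directions for `t > 0`. At such a `μ` the tangent line of `ℓ` at `x = (n/σ)(b - μ)` gives
`ℓ(y) ≥ ℓ(x) + μ (y - x)`, which makes each objective grow at least like `(λ - μ)² / (2σ)` away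
from `μ` (for the dual objective, through the Fenchel–Young equality `ℓ*(μ) = μ x - ℓ(x)`);
so `μ` is the unique minimizer of both.
-/

open Set

theorem ConvexOn.add_deriv_mul_sub_le {f : ℝ → ℝ} {S : Set ℝ} {x y : ℝ}
    (hf : ConvexOn ℝ S f) (hx : x ∈ S) (hy : y ∈ S) (hfx : DifferentiableAt ℝ f x) :
    f x + deriv f x * (y - x) ≤ f y := by
  rcases lt_trichotomy x y with hxy | rfl | hyx
  · have h := hf.deriv_le_slope hx hy hxy hfx
    rw [slope_def_field, le_div_iff₀ (sub_pos.2 hxy)] at h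
    linarith
  · simp
  · have h := hf.slope_le_deriv hy hx hyx hfx
    rw [slope_def_field, div_le_iff₀ (sub_pos.2 hyx)] at h
    linarith

theorem ConvexOn.surjective_deriv_add_mul {f : ℝ → ℝ} (hf : ConvexOn ℝ univ f)
    (hfd : Differentiable ℝ f) {t : ℝ} (ht : 0 < t) :
    Function.Surjective fun x => deriv f x + t * x := by
  intro y
  have hmono := hf.monotoneOn_deriv fun x _ => hfd x
  set R := (|y - deriv f 0| + 1) / t
  have hR : 0 ≤ R := by positivity
  have htR : t * R = |y - deriv f 0| + 1 := mul_div_cancel₀ _ ht.ne'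
  have hderiv : ∀ x ∈ Icc (-R) R, HasDerivWithinAt (fun x => f x + t * (x ^ 2 / 2))
      (deriv f x + t * x) (Icc (-R) R) x := by
    intro x _
    have hsq : HasDerivAt (fun x : ℝ => x ^ 2 / 2) x x := by
      simpa using (hasDerivAt_pow 2 x).div_const 2
    exact ((hfd x).hasDerivAt.add (hsq.const_mul t)).hasDerivWithinAt
  have hleft : deriv f (-R) + t * -R < y := by
    have := hmono (mem_univ _) (mem_univ _) (neg_nonpos.2 hR)
    linarith [neg_abs_le (y - deriv f 0)]
  have hright : y < deriv f R + t * R := by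
    have := hmono (mem_univ _) (mem_univ _) hR
    linarith [le_abs_self (y - deriv f 0)]
  obtain ⟨x, -, hx⟩ := exists_hasDerivWithinAt_eq_of_gt_of_lt (by linarith) hderiv hleft hright
  exact ⟨x, hx⟩

theorem coe_le_sconj (ℓ : ℝ → ℝ) (v x : ℝ) : ((v * x - ℓ x : ℝ) : EReal) ≤ sconj ℓ v :=
  le_iSup (fun y => ((v * y - ℓ y : ℝ) : EReal)) x

theorem sconj_deriv {ℓ : ℝ → ℝ} (hconv : ConvexOn ℝ univ ℓ) {x : ℝ}
    (hx : DifferentiableAt ℝ ℓ x) :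
    sconj ℓ (deriv ℓ x) = ((deriv ℓ x * x - ℓ x : ℝ) : EReal) := by
  refine le_antisymm (iSup_le fun y => EReal.coe_le_coe_iff.2 ?_) (coe_le_sconj ℓ _ x)
  have := hconv.add_deriv_mul_sub_le (mem_univ x) (mem_univ y) hx
  linarith

noncomputable def primalObjective (ℓ : ℝ → ℝ) (σ n b lam : ℝ) : ℝ :=
  (1 / n) * ℓ ((n / σ) * (b - lam)) + lam ^ 2 / (2 * σ)

noncomputable def dualObjective (ℓ : ℝ → ℝ) (σ n b lam : ℝ) : EReal :=
  ((1 / n : ℝ) : EReal) * sconj ℓ lam + (((lam - b) ^ 2 / (2 * σ) : ℝ) : EReal)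

theorem forall_le_iff_eq_of_add_sq_le {f : ℝ → EReal} {μ m c : ℝ} (hc : 0 < c)
    (hμ : f μ = m) (hf : ∀ lam, f μ + (((lam - μ) ^ 2 / c : ℝ) : EReal) ≤ f lam) (x : ℝ) :
    (∀ lam, f x ≤ f lam) ↔ x = μ := by
  constructor
  · intro hx
    have h := (hf x).trans (hx μ)
    rw [hμ, ← EReal.coe_add, EReal.coe_le_coe_iff] at h
    have hq : (x - μ) ^ 2 / c ≤ 0 := by linarith
    have hsq : (x - μ) ^ 2 ≤ 0 := by rwa [div_le_iff₀ hc, zero_mul] at hq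
    exact sub_eq_zero.1 (pow_eq_zero_iff two_ne_zero |>.1 (le_antisymm hsq (sq_nonneg _)))
  · rintro rfl lam
    exact (le_add_of_nonneg_right (EReal.coe_nonneg.2 (by positivity))).trans (hf lam)

theorem exists_deriv_eq {ℓ : ℝ → ℝ} {σ n : ℝ} (hconv : ConvexOn ℝ univ ℓ)
    (hdiff : Differentiable ℝ ℓ) (hσ : 0 < σ) (hn : 0 < n) (b : ℝ) :
    ∃ μ, deriv ℓ ((n / σ) * (b - μ)) = μ := by
  obtain ⟨x, hx⟩ := hconv.surjective_deriv_add_mul hdiff (div_pos hσ hn) b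
  refine ⟨b - σ / n * x, ?_⟩
  have : n / σ * (b - (b - σ / n * x)) = x := by
    field_simp
    ring
  rw [this]
  linarith

section Objectives

variable {ℓ : ℝ → ℝ} {σ n b μ : ℝ}

theorem primalObjective_add_sq_le (hconv : ConvexOn ℝ univ ℓ)
    (hdiff : DifferentiableAt ℝ ℓ ((n / σ) * (b - μ)))
    (hσ : 0 < σ) (hn : 0 < n) (hμ : deriv ℓ ((n / σ) * (b - μ)) = μ) (lam : ℝ) :
    primalObjective ℓ σ n b μ + (lam - μ) ^ 2 / (2 * σ) ≤ primalObjective ℓ σ n b lam := by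
  have htangent := hconv.add_deriv_mul_sub_le (mem_univ ((n / σ) * (b - μ)))
    (mem_univ ((n / σ) * (b - lam))) hdiff
  rw [hμ] at htangent
  have hscaled := mul_le_mul_of_nonneg_left htangent (by positivity : (0 : ℝ) ≤ 1 / n)
  have hslope : 1 / n * (μ * (n / σ * (b - lam) - n / σ * (b - μ))) = μ * (μ - lam) / σ := by
    field_simp
    ring
  have hsq : μ ^ 2 / (2 * σ) + (lam - μ) ^ 2 / (2 * σ)
      = μ * (μ - lam) / σ + lam ^ 2 / (2 * σ) := by
    field_simp
    ring
  unfold primalObjective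
  rw [mul_add, hslope] at hscaled
  linarith

theorem coe_le_dualObjective (hn : 0 < n) (lam x : ℝ) :
    (((1 / n) * (lam * x - ℓ x) + (lam - b) ^ 2 / (2 * σ) : ℝ) : EReal)
      ≤ dualObjective ℓ σ n b lam := by
  rw [EReal.coe_add, EReal.coe_mul]
  exact add_le_add_left
    (mul_le_mul_of_nonneg_left (coe_le_sconj ℓ lam x) (EReal.coe_nonneg.2 (by positivity))) _

theorem dualObjective_of_deriv_eq (hconv : ConvexOn ℝ univ ℓ)
    (hdiff : DifferentiableAt ℝ ℓ ((n / σ) * (b - μ)))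
    (hμ : deriv ℓ ((n / σ) * (b - μ)) = μ) :
    dualObjective ℓ σ n b μ = (((1 / n) * (μ * ((n / σ) * (b - μ)) - ℓ ((n / σ) * (b - μ)))
      + (μ - b) ^ 2 / (2 * σ) : ℝ) : EReal) := by
  have hconj := sconj_deriv hconv hdiff
  rw [hμ] at hconj
  rw [dualObjective, hconj, ← EReal.coe_mul, ← EReal.coe_add]

theorem dualObjective_add_sq_le (hconv : ConvexOn ℝ univ ℓ)
    (hdiff : DifferentiableAt ℝ ℓ ((n / σ) * (b - μ)))
    (hσ : 0 < σ) (hn : 0 < n) (hμ : deriv ℓ ((n / σ) * (b - μ)) = μ) (lam : ℝ) :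
    dualObjective ℓ σ n b μ + (((lam - μ) ^ 2 / (2 * σ) : ℝ) : EReal)
      ≤ dualObjective ℓ σ n b lam := by
  refine le_of_eq_of_le ?_ (coe_le_dualObjective hn lam ((n / σ) * (b - μ)))
  rw [dualObjective_of_deriv_eq hconv hdiff hμ, ← EReal.coe_add]
  congr 1
  field_simp
  ring

end Objectives

/-- For convex differentiable `ℓ : ℝ → ℝ`, `σ, n > 0` and `b ∈ ℝ`: `λ*` minimizes
`λ ↦ (1/n)·ℓ*(λ) + (λ−b)²/(2σ)` (extended-real-valued) iff `λ*` minimizes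
`λ ↦ (1/n)·ℓ((n/σ)(b−λ)) + λ²/(2σ)`. -/
theorem stmt_11 (ℓ : ℝ → ℝ) (hconv : ConvexOn ℝ Set.univ ℓ)
    (hdiff : Differentiable ℝ ℓ)
    (σ n : ℝ) (hσ : 0 < σ) (hn : 0 < n) (b lamstar : ℝ) :
    (∀ lam : ℝ,
        ((1 / n : ℝ) : EReal) * sconj ℓ lamstar + (((lamstar - b) ^ 2 / (2 * σ) : ℝ) : EReal)
          ≤ ((1 / n : ℝ) : EReal) * sconj ℓ lam + (((lam - b) ^ 2 / (2 * σ) : ℝ) : EReal))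
      ↔ (∀ lam : ℝ,
        (1 / n) * ℓ ((n / σ) * (b - lamstar)) + lamstar ^ 2 / (2 * σ)
          ≤ (1 / n) * ℓ ((n / σ) * (b - lam)) + lam ^ 2 / (2 * σ)) := by
  obtain ⟨μ, hμ⟩ := exists_deriv_eq hconv hdiff hσ hn b
  have h2σ : 0 < 2 * σ := by positivity
  have hdual := forall_le_iff_eq_of_add_sq_le h2σ
    (dualObjective_of_deriv_eq hconv (hdiff _) hμ)
    (dualObjective_add_sq_le hconv (hdiff _) hσ hn hμ) lamstar
  have hprimal := forall_le_iff_eq_of_add_sq_le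
    (f := fun lam => (primalObjective ℓ σ n b lam : EReal)) h2σ rfl
    (fun lam => by exact_mod_cast primalObjective_add_sq_le hconv (hdiff _) hσ hn hμ lam)
    lamstar
  simp only [EReal.coe_le_coe_iff] at hprimal
  exact hdual.trans hprimal.symm
end
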